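/- Under the hypotheses of the error decomposition, for the filtered error operator E = U e(Λ) U^T with e_1, e_2 as above, and with V_k = diag(1/v_k(i)) (v_k(i) > 0) and sampling matrix M, for all i ≠ j: ||E^T V_k^T M^T (δ_i^r - δ_j^r)||^2 ≤ |e_1^2 - e_2^2| (D_{ij}^r)^2 + 2 e_2^2 / (min_i v_k(i))^2, where D_{ij}^r = ||U_k^T V_k^T M^T (δ_i^r - δ_j^r)||. -/

import Mathlib

/-!
Put `x = Vᵀ Mᵀ (δᵢ - δⱼ)` and `y = Uᵀ x`. Since `U` is orthogonal, `‖Eᵀ x‖² = ∑ₗ e(λₗ)² yₗ²`,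
`‖y‖ = ‖x‖`, and `(D_{ij}^r)²` is the part of `‖y‖²` carried by the first `k` coordinates.
Bounding `e(λₗ)² ≤ e₂² + |e₁² - e₂²| [l < k]` splits the sum into `|e₁² - e₂²| (D_{ij}^r)² + e₂² ‖x‖²`,
and `x` has at most two nonzero entries `±1/v(ω)`, so `‖x‖² ≤ 2 / (min v)²`.
-/

open Matrix

noncomputable def enorm {m : ℕ} (v : Fin m → ℝ) : ℝ := Real.sqrt (∑ i, v i ^ 2)

open Finset

section SumSq

variable {m n R : Type*} [Fintype m] [Fintype n] [CommSemiring R]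

lemma sum_sq_eq_dotProduct (z : n → R) : ∑ l, z l ^ 2 = z ⬝ᵥ z := by
  simp only [dotProduct, sq]

lemma sum_sq_mulVec_of_transpose_mul_self_eq_one [DecidableEq n] {W : Matrix m n R}
    (hW : Wᵀ * W = 1) (z : n → R) : ∑ a, (W *ᵥ z) a ^ 2 = ∑ l, z l ^ 2 := by
  rw [sum_sq_eq_dotProduct, sum_sq_eq_dotProduct, dotProduct_mulVec, ← mulVec_transpose,
    mulVec_mulVec, hW, one_mulVec]

lemma sum_sq_conj_diagonal_mulVec [DecidableEq n] {W : Matrix m n R} (hW : Wᵀ * W = 1)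
    (f : n → R) (x : m → R) :
    ∑ a, ((W * diagonal f * Wᵀ) *ᵥ x) a ^ 2 = ∑ l, f l ^ 2 * (Wᵀ *ᵥ x) l ^ 2 := by
  rw [← mulVec_mulVec, ← mulVec_mulVec, sum_sq_mulVec_of_transpose_mul_self_eq_one hW]
  simp only [mulVec_diagonal, mul_pow]

end SumSq

lemma transpose_conj_diagonal {m n R : Type*} [Fintype n] [DecidableEq n] [CommSemiring R]
    (W : Matrix m n R) (f : n → R) : (W * diagonal f * Wᵀ)ᵀ = W * diagonal f * Wᵀ := by
  rw [transpose_mul, transpose_mul, diagonal_transpose, transpose_transpose, Matrix.mul_assoc]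

section OrderedRing

variable {ι R : Type*} [Fintype ι] [CommRing R] [LinearOrder R] [IsStrictOrderedRing R]

lemma sum_sq_mul_sq_le [DecidableEq ι] (K : Finset ι) (f y : ι → R) {c₁ c₂ : R}
    (h₁ : ∀ l ∈ K, |f l| ≤ c₁) (h₂ : ∀ l ∉ K, |f l| ≤ c₂) :
    ∑ l, f l ^ 2 * y l ^ 2 ≤ |c₁ ^ 2 - c₂ ^ 2| * ∑ l ∈ K, y l ^ 2 + c₂ ^ 2 * ∑ l, y l ^ 2 := by
  have hf : ∀ l, f l ^ 2 ≤ (if l ∈ K then |c₁ ^ 2 - c₂ ^ 2| else 0) + c₂ ^ 2 := by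
    intro l
    rw [← sq_abs]
    split_ifs with hl
    · have := pow_le_pow_left₀ (abs_nonneg _) (h₁ l hl) 2
      linarith [le_abs_self (c₁ ^ 2 - c₂ ^ 2)]
    · simpa using pow_le_pow_left₀ (abs_nonneg _) (h₂ l hl) 2
  calc ∑ l, f l ^ 2 * y l ^ 2
      ≤ ∑ l, ((if l ∈ K then |c₁ ^ 2 - c₂ ^ 2| else 0) + c₂ ^ 2) * y l ^ 2 :=
        sum_le_sum fun l _ => mul_le_mul_of_nonneg_right (hf l) (sq_nonneg _)
    _ = |c₁ ^ 2 - c₂ ^ 2| * ∑ l ∈ K, y l ^ 2 + c₂ ^ 2 * ∑ l, y l ^ 2 := by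
        simp only [add_mul, ite_mul, zero_mul, sum_add_distrib, sum_ite_mem, univ_inter,
          mul_sum]

lemma sum_sq_mul_le {w z : ι → R} {C : R} (hw : ∀ l, |w l| ≤ C) :
    ∑ l, (w l * z l) ^ 2 ≤ C ^ 2 * ∑ l, z l ^ 2 := by
  rw [mul_sum]
  refine sum_le_sum fun l _ => ?_
  rw [mul_pow, ← sq_abs (w l)]
  exact mul_le_mul_of_nonneg_right (pow_le_pow_left₀ (abs_nonneg _) (hw l) 2) (sq_nonneg _)

lemma sum_sq_single_sub_single_le_two [DecidableEq ι] (a b : ι) :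
    ∑ l, (Pi.single a 1 - Pi.single b 1 : ι → R) l ^ 2 ≤ 2 := by
  by_cases hab : a = b
  · simp [hab]
  · simp [Pi.single_apply, sub_sq, sum_add_distrib, sum_sub_distrib, Ne.symm hab,
      one_add_one_eq_two]

end OrderedRing

lemma transpose_mulVec_single_one_of_selection {n N R : Type*} [Fintype n] [DecidableEq n]
    [DecidableEq N] [Semiring R] {ω : n → N} {M : Matrix n N R}
    (hM : ∀ i j, M i j = if j = ω i then 1 else 0) (i : n) :
    Mᵀ *ᵥ Pi.single i 1 = Pi.single (ω i) 1 := by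
  ext j
  simp [hM, Pi.single_apply]

lemma Fin.mem_map_castLEEmb_univ {k N : ℕ} (h : k ≤ N) (l : Fin N) :
    l ∈ univ.map (Fin.castLEEmb h) ↔ (l : ℕ) < k := by
  simp only [mem_map, mem_univ, true_and, Fin.coe_castLEEmb]
  exact ⟨fun ⟨q, hq⟩ => hq ▸ q.isLt, fun hl => ⟨⟨l, hl⟩, rfl⟩⟩

lemma sum_sq_diagonal_inv_mulVec_selection_le {n N : Type*} [Fintype n] [DecidableEq n]
    [Fintype N] [DecidableEq N] {ω : n → N} {M : Matrix n N ℝ}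
    (hM : ∀ i j, M i j = if j = ω i then 1 else 0) {v : N → ℝ} (hv : ∀ l, 0 < v l) {vmin : ℝ}
    (hvmin : IsLeast (Set.range v) vmin) (i j : n) :
    ∑ l, ((diagonal fun l => (v l)⁻¹) *ᵥ (Mᵀ *ᵥ (Pi.single i 1 - Pi.single j 1))) l ^ 2
      ≤ 2 / vmin ^ 2 := by
  obtain ⟨⟨p, rfl⟩, hmin⟩ := hvmin
  have hinv : ∀ l, |(v l)⁻¹| ≤ (v p)⁻¹ := fun l => by
    rw [abs_of_pos (inv_pos.2 (hv l))]
    exact inv_anti₀ (hv p) (hmin ⟨l, rfl⟩)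
  simp only [mulVec_diagonal, mulVec_sub, transpose_mulVec_single_one_of_selection hM]
  calc _ ≤ (v p)⁻¹ ^ 2 * 2 := (sum_sq_mul_le hinv).trans
          (mul_le_mul_of_nonneg_left (sum_sq_single_sub_single_le_two _ _) (sq_nonneg _))
    _ = 2 / v p ^ 2 := by ring

lemma sq_enorm_transpose_mulVec_of_castLE {N k : ℕ} (hkN : k ≤ N) {U : Matrix (Fin N) (Fin N) ℝ}
    {Uk : Matrix (Fin N) (Fin k) ℝ} (hUk : ∀ i j, Uk i j = U i (Fin.castLE hkN j))
    (x : Fin N → ℝ) :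
    _root_.enorm (Ukᵀ *ᵥ x) ^ 2 = ∑ l ∈ univ.map (Fin.castLEEmb hkN), (Uᵀ *ᵥ x) l ^ 2 := by
  rw [_root_.enorm, Real.sq_sqrt (sum_nonneg fun _ _ => sq_nonneg _), sum_map]
  congr! 2 with q
  simp [mulVec, dotProduct, hUk]

theorem filtered_error_on_sampled_features_general {N n k : ℕ}
    (U : Matrix (Fin N) (Fin N) ℝ) (lam : Fin N → ℝ)
    (hU1 : Uᵀ * U = 1)
    (e : ℝ → ℝ) (e1 e2 : ℝ) (hkN : k ≤ N)
    (he1 : ∀ l : Fin N, (l : ℕ) < k → |e (lam l)| ≤ e1)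
    (he2 : ∀ l : Fin N, k ≤ (l : ℕ) → |e (lam l)| ≤ e2)
    (E : Matrix (Fin N) (Fin N) ℝ)
    (hE : E = U * Matrix.diagonal (fun l => e (lam l)) * Uᵀ)
    (Uk : Matrix (Fin N) (Fin k) ℝ) (hUk : ∀ i j, Uk i j = U i (Fin.castLE hkN j))
    (v : Fin N → ℝ) (hv : ∀ i, 0 < v i)
    (V : Matrix (Fin N) (Fin N) ℝ) (hV : V = Matrix.diagonal fun i => (v i)⁻¹)
    (ω : Fin n → Fin N)
    (M : Matrix (Fin n) (Fin N) ℝ) (hM : ∀ i j, M i j = if j = ω i then 1 else 0)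
    (i j : Fin n)
    (vmin : ℝ) (hvmin : IsLeast (Set.range v) vmin)
    (Dijr : ℝ)
    (hD : Dijr = _root_.enorm (Ukᵀ.mulVec (Vᵀ.mulVec (Mᵀ.mulVec (Pi.single i 1 - Pi.single j 1))))) :
    ∑ a, (Eᵀ.mulVec (Vᵀ.mulVec (Mᵀ.mulVec (Pi.single i 1 - Pi.single j 1))) a) ^ 2
      ≤ |e1 ^ 2 - e2 ^ 2| * Dijr ^ 2 + 2 * e2 ^ 2 / vmin ^ 2 := by
  set x := Vᵀ *ᵥ (Mᵀ *ᵥ (Pi.single i 1 - Pi.single j 1)) with hx_def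
  have hx : ∑ l, x l ^ 2 ≤ 2 / vmin ^ 2 := by
    rw [hx_def, hV, diagonal_transpose]
    exact sum_sq_diagonal_inv_mulVec_selection_le hM hv hvmin i j
  have hy : ∑ l, (Uᵀ *ᵥ x) l ^ 2 = ∑ l, x l ^ 2 :=
    sum_sq_mulVec_of_transpose_mul_self_eq_one
      (by rw [transpose_transpose]; exact mul_eq_one_comm.mp hU1) x
  rw [hE, transpose_conj_diagonal, sum_sq_conj_diagonal_mulVec hU1, hD,
    sq_enorm_transpose_mulVec_of_castLE hkN hUk]
  calc _ ≤ |e1 ^ 2 - e2 ^ 2| * ∑ l ∈ univ.map (Fin.castLEEmb hkN), (Uᵀ *ᵥ x) l ^ 2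
          + e2 ^ 2 * ∑ l, (Uᵀ *ᵥ x) l ^ 2 :=
        sum_sq_mul_sq_le _ _ _ (fun l hl => he1 l ((Fin.mem_map_castLEEmb_univ hkN l).1 hl))
          (fun l hl => he2 l (not_lt.1 (mt (Fin.mem_map_castLEEmb_univ hkN l).2 hl)))
    _ ≤ |e1 ^ 2 - e2 ^ 2| * ∑ l ∈ univ.map (Fin.castLEEmb hkN), (Uᵀ *ᵥ x) l ^ 2
          + e2 ^ 2 * (2 / vmin ^ 2) := by
        rw [hy]; gcongr
    _ = _ := by ring

theorem filtered_error_on_sampled_features {N n k : ℕ}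
    (U : Matrix (Fin N) (Fin N) ℝ) (lam : Fin N → ℝ)
    (hU1 : Uᵀ * U = 1) (hU2 : U * Uᵀ = 1) (hmono : Monotone lam)
    (e : ℝ → ℝ) (e1 e2 : ℝ) (hkN : k ≤ N)
    (he1 : ∀ l : Fin N, (l : ℕ) < k → |e (lam l)| ≤ e1)
    (he2 : ∀ l : Fin N, k ≤ (l : ℕ) → |e (lam l)| ≤ e2)
    (he1n : 0 ≤ e1) (he2n : 0 ≤ e2)
    (E : Matrix (Fin N) (Fin N) ℝ)
    (hE : E = U * Matrix.diagonal (fun l => e (lam l)) * Uᵀ)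
    (Uk : Matrix (Fin N) (Fin k) ℝ) (hUk : ∀ i j, Uk i j = U i (Fin.castLE hkN j))
    (v : Fin N → ℝ) (hv : ∀ i, 0 < v i)
    (V : Matrix (Fin N) (Fin N) ℝ) (hV : V = Matrix.diagonal fun i => (v i)⁻¹)
    (ω : Fin n → Fin N) (hω : Function.Injective ω)
    (M : Matrix (Fin n) (Fin N) ℝ) (hM : ∀ i j, M i j = if j = ω i then 1 else 0)
    (i j : Fin n) (hij : i ≠ j)
    (vmin : ℝ) (hvmin : IsLeast (Set.range v) vmin)
    (Dijr : ℝ)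
    (hD : Dijr = _root_.enorm (Ukᵀ.mulVec (Vᵀ.mulVec (Mᵀ.mulVec (Pi.single i 1 - Pi.single j 1))))) :
    ∑ a, (Eᵀ.mulVec (Vᵀ.mulVec (Mᵀ.mulVec (Pi.single i 1 - Pi.single j 1))) a) ^ 2
      ≤ |e1 ^ 2 - e2 ^ 2| * Dijr ^ 2 + 2 * e2 ^ 2 / vmin ^ 2 :=
  filtered_error_on_sampled_features_general U lam hU1 e e1 e2 hkN he1 he2 E hE Uk hUk v hv V hV ω M
    hM i j vmin hvmin Dijr hD
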